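/- For λ ≥ 0 and 0 ≤ α < 1, the TC kernel s(i,j) = λ α^{max(i,j)} defined on positive integers is a positive semidefinite kernel: for any finite set of indices i₁ < … < i_n and reals c₁, …, c_n, Σ_{k,l} c_k c_l λ α^{max(i_k, i_l)} ≥ 0. -/
import Mathlib


/-- The TC (tuned/correlated) kernel `s(i,j) = λ α^{max(i,j)}` on positive integers is
positive semidefinite: for any indices `i₁ < … < i_n` (all ≥ 1) and reals `c₁,…,c_n`,
`Σ_{k,l} c_k c_l λ α^{max(i_k,i_l)} ≥ 0`. -/
theorem tc_kernel_posSemidef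
    (lam α : ℝ) (hlam : 0 ≤ lam) (hα : 0 ≤ α) (hα1 : α < 1)
    {n : ℕ} (ι : Fin n → ℕ) (hι : StrictMono ι) (hpos : ∀ k, 1 ≤ ι k)
    (c : Fin n → ℝ) :
    0 ≤ ∑ k, ∑ l, c k * c l * (lam * α ^ max (ι k) (ι l)) := by
  set M : ℕ := (Finset.univ.sup ι) + 1 with hMdef
  have hM : ∀ k, ι k < M := fun k =>
    Nat.lt_succ_of_le (Finset.le_sup (Finset.mem_univ k))
  have hαne : α ≠ 1 := ne_of_lt hα1
  have geom : ∀ m : ℕ, m ≤ M → (α : ℝ) ^ m = α ^ M + (1 - α) * ∑ t ∈ Finset.Ico m M, α ^ t := by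
    intro m hm
    rw [geom_sum_Ico hαne hm]
    have : α - 1 ≠ 0 := sub_ne_zero.mpr hαne
    field_simp
    ring
  have key : ∀ k l : Fin n, (α:ℝ) ^ max (ι k) (ι l)
      = α ^ M + (1 - α) * ∑ t ∈ Finset.range M,
          ((if ι k ≤ t then (1:ℝ) else 0) * (if ι l ≤ t then (1:ℝ) else 0) * α ^ t) := by
    intro k l
    rw [geom (max (ι k) (ι l)) (le_of_lt (max_lt (hM k) (hM l)))]
    congr 2
    rw [show ∑ t ∈ Finset.range M,
          ((if ι k ≤ t then (1:ℝ) else 0) * (if ι l ≤ t then (1:ℝ) else 0) * α ^ t)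
        = ∑ t ∈ Finset.range M, (if max (ι k) (ι l) ≤ t then (α:ℝ) ^ t else 0) from
      Finset.sum_congr rfl (by intro t _; by_cases h1 : ι k ≤ t <;> by_cases h2 : ι l ≤ t <;>
        simp [h1, h2, max_le_iff])]
    rw [← Finset.sum_filter]
    congr 1
    ext t
    simp [Finset.mem_Ico, Finset.mem_range, Finset.mem_filter]
    omega
  have expand : ∑ k, ∑ l, c k * c l * (lam * α ^ max (ι k) (ι l))
      = lam * (α ^ M) * (∑ k, c k) ^ 2
        + lam * (1 - α) * ∑ t ∈ Finset.range M,
            α ^ t * (∑ k, c k * (if ι k ≤ t then (1:ℝ) else 0)) ^ 2 := by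
    simp_rw [key, mul_add, Finset.sum_add_distrib]
    congr 1
    · rw [sq, Finset.sum_mul_sum]
      simp_rw [Finset.mul_sum]
      refine Finset.sum_congr rfl fun k _ => Finset.sum_congr rfl fun l _ => by ring
    · simp_rw [sq, Finset.sum_mul_sum, Finset.mul_sum]
      refine Eq.trans (Finset.sum_congr rfl fun k _ => Finset.sum_comm) ?_
      refine Eq.trans (Finset.sum_comm) ?_
      refine Finset.sum_congr rfl fun t _ => ?_
      refine Finset.sum_congr rfl fun k _ => Finset.sum_congr rfl fun l _ => by ring
  rw [expand]
  have h1 : 0 ≤ lam * (α ^ M) * (∑ k, c k) ^ 2 := by positivity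
  have h2 : 0 ≤ lam * (1 - α) * ∑ t ∈ Finset.range M,
      α ^ t * (∑ k, c k * (if ι k ≤ t then (1:ℝ) else 0)) ^ 2 := by
    apply mul_nonneg (mul_nonneg hlam (by linarith))
    apply Finset.sum_nonneg
    intro t _
    positivity
  linarith
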